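/- Every connected Condorcet domain is a peak-pit domain: if D ⊆ L([n]) is a Condorcet domain containing α and ω such that the subgraph of the Bruhat graph induced on D is connected, then for every triple i<j<k, D satisfies the peak condition or the pit condition. -/

import Mathlib

/-- The set of linear orders on `{1,…,n}`, encoded as words (lists) listing the
alternatives from worst to best; such a word is a permutation of `1,2,…,n`. -/
def LinWords (n : ℕ) : Set (List ℕ) := {l | l.Perm (List.range' 1 n)}

/-- Linear orders on a finite ground set `X ⊆ ℕ`, encoded as words. -/
def LinWordsOn (X : Finset ℕ) : Set (List ℕ) := {l | l.Perm (X.sort (· ≤ ·))}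

/-- `ltIn σ i j` : `i` occurs before (i.e. is worse than) `j` in the word `σ`;
this is the relation `i <_σ j`. -/
def ltIn (σ : List ℕ) (i j : ℕ) : Prop := σ.idxOf i < σ.idxOf j

instance (σ : List ℕ) (i j : ℕ) : Decidable (ltIn σ i j) :=
  inferInstanceAs (Decidable (σ.idxOf i < σ.idxOf j))

/-- Three orders in `D` whose restrictions to `{i,j,k}` are exactly the three
cyclic patterns `i<j<k`, `j<k<i`, `k<i<j`. -/
def CyclicTriple (D : Set (List ℕ)) (i j k : ℕ) : Prop :=
  ∃ σ₁ ∈ D, ∃ σ₂ ∈ D, ∃ σ₃ ∈ D,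
    (ltIn σ₁ i j ∧ ltIn σ₁ j k) ∧ (ltIn σ₂ j k ∧ ltIn σ₂ k i) ∧ (ltIn σ₃ k i ∧ ltIn σ₃ i j)

/-- `D` is cyclic: some three distinct alternatives and three orders of `D`
restrict to `{i,j,k}` as `{ijk, jki, kij}` or as `{kji, jik, ikj}`. -/
def IsCyclicDom (D : Set (List ℕ)) : Prop :=
  ∃ i j k : ℕ, i ≠ j ∧ j ≠ k ∧ i ≠ k ∧ (CyclicTriple D i j k ∨ CyclicTriple D k j i)

/-- On the triple `i<j<k`, in every order of `D` the alternative `j` is never the worst. -/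
def PeakCond (D : Set (List ℕ)) (i j k : ℕ) : Prop :=
  ∀ σ ∈ D, ¬ (ltIn σ j i ∧ ltIn σ j k)

/-- On the triple `i<j<k`, in every order of `D` the alternative `j` is never the best. -/
def PitCond (D : Set (List ℕ)) (i j k : ℕ) : Prop :=
  ∀ σ ∈ D, ¬ (ltIn σ i j ∧ ltIn σ k j)

/-- `D` is a peak-pit domain: every triple `i<j<k` in `[n]` satisfies the peak
condition or the pit condition. -/
def IsPeakPit (n : ℕ) (D : Set (List ℕ)) : Prop :=
  ∀ i j k : ℕ, 1 ≤ i → i < j → j < k → k ≤ n → (PeakCond D i j k ∨ PitCond D i j k)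

/-- The four symbols a casting can assign to a triple. -/
inductive Symb | peak | pit | right | left

/-- Membership of (the restriction of) `σ` in the four-element domain `D₃(s)` on
the triple `i<j<k`: for `∩`, `j` is not worst; for `∪`, `j` is not best; for `→`,
`k` is not middle; for `←`, `i` is not middle. -/
def TripleCond : Symb → List ℕ → ℕ → ℕ → ℕ → Prop
  | Symb.peak, σ, i, j, k => ¬ (ltIn σ j i ∧ ltIn σ j k)
  | Symb.pit,  σ, i, j, k => ¬ (ltIn σ i j ∧ ltIn σ k j)
  | Symb.right, σ, i, j, k => ¬ ((ltIn σ i k ∧ ltIn σ k j) ∨ (ltIn σ j k ∧ ltIn σ k i))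
  | Symb.left,  σ, i, j, k => ¬ ((ltIn σ j i ∧ ltIn σ i k) ∨ (ltIn σ k i ∧ ltIn σ i j))

/-- The domain `D(c)` of a casting `c`: all linear orders on `[n]` whose restriction
to every triple `i<j<k` lies in `D₃(c i j k)`. -/
def CastDomain (n : ℕ) (c : ℕ → ℕ → ℕ → Symb) : Set (List ℕ) :=
  {σ | σ ∈ LinWords n ∧ ∀ i j k : ℕ, 1 ≤ i → i < j → j < k → k ≤ n → TripleCond (c i j k) σ i j k}

/-- The set of inversions of a word `σ`: pairs `(i,j)` of alternatives of `σ`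
with `i < j` as integers and `j <_σ i`. -/
def InvPairs (σ : List ℕ) : Set (ℕ × ℕ) :=
  {p | p.1 ∈ σ ∧ p.2 ∈ σ ∧ p.1 < p.2 ∧ ltIn σ p.2 p.1}

/-- `τ` covers `σ` in the weak Bruhat order: `InvPairs τ` is `InvPairs σ` plus exactly one pair. -/
def Covers (τ σ : List ℕ) : Prop :=
  ∃ p : ℕ × ℕ, p ∉ InvPairs σ ∧ InvPairs τ = insert p (InvPairs σ)

/-- Adjacency in the Bruhat graph. -/
def BruhatAdj (σ τ : List ℕ) : Prop := Covers τ σ ∨ Covers σ τ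

/-- A path in the Bruhat graph from `σ` to `τ` all of whose vertices lie in `D`. -/
def PathIn (D : Set (List ℕ)) (σ τ : List ℕ) : Prop :=
  ∃ (m : ℕ) (f : ℕ → List ℕ), f 0 = σ ∧ f m = τ ∧
    (∀ t ≤ m, f t ∈ D) ∧ ∀ t < m, BruhatAdj (f t) (f (t + 1))

/-- `D` is semi-connected (ground set `[n]`): it contains the increasing order `α`
and the decreasing order `ω` and a Bruhat path from `α` to `ω` inside `D`. -/
def SemiConnected (n : ℕ) (D : Set (List ℕ)) : Prop :=
  List.range' 1 n ∈ D ∧ (List.range' 1 n).reverse ∈ D ∧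
    PathIn D (List.range' 1 n) (List.range' 1 n).reverse

/-- `D` is semi-connected on the ground set `X`. -/
def SemiConnectedOn (X : Finset ℕ) (D : Set (List ℕ)) : Prop :=
  X.sort (· ≤ ·) ∈ D ∧ (X.sort (· ≤ ·)).reverse ∈ D ∧
    PathIn D (X.sort (· ≤ ·)) (X.sort (· ≤ ·)).reverse

/-- `A` is an ideal of the order `σ`: a downward-closed (w.r.t. `<_σ`) set of
alternatives of `σ`, i.e. an initial segment of the word `σ`. -/
def IsIdeal (σ : List ℕ) (A : Set ℕ) : Prop :=
  (∀ x ∈ A, x ∈ σ) ∧ ∀ x ∈ A, ∀ y ∈ σ, ltIn σ y x → y ∈ A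

/-- The set system of all ideals of `σ`. -/
def IdSet (σ : List ℕ) : Set (Set ℕ) := {A | IsIdeal σ A}

/-- The convex hull of a set of naturals: the minimal integer interval containing it. -/
def hull (S : Set ℕ) : Set ℕ := {x | ∃ a ∈ S, ∃ b ∈ S, a ≤ x ∧ x ≤ b}

/-- `A` and `B` are separated: the convex hulls of `A \ B` and `B \ A` are disjoint. -/
def Separated (A B : Set ℕ) : Prop := Disjoint (hull (A \ B)) (hull (B \ A))

/-- A separated set system: any two members are separated. -/
def SepSystem (𝒳 : Set (Set ℕ)) : Prop := ∀ A ∈ 𝒳, ∀ B ∈ 𝒳, Separated A B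

/-- The concatenation `σ * τ` of a word on `[n]` with a word on `[n']`, the latter
shifted by `n`. -/
def concatWord (n : ℕ) (σ τ : List ℕ) : List ℕ := σ ++ τ.map (· + n)

/-- The concatenation `{σ * τ : σ ∈ D, τ ∈ D'}` of two domains. -/
def ConcatDomain (n : ℕ) (D D' : Set (List ℕ)) : Set (List ℕ) :=
  {l | ∃ σ ∈ D, ∃ τ ∈ D', l = concatWord n σ τ}

/-- The simple-majority relation `i sm(ν) j` for an opinion `ν` on the finite domain `D`. -/
def SM (D : Finset (List ℕ)) (ν : List ℕ → ℕ) (i j : ℕ) : Prop :=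
  (∑ σ ∈ D, if ltIn σ j i then ν σ else 0) > (∑ σ ∈ D, if ltIn σ i j then ν σ else 0)

/-- Fishburn's domain (the alternating scheme): for each triple `i<j<k`, if `j` is
even then `j` is not the worst of `{i,j,k}`, and if `j` is odd then `j` is not the best. -/
def Fishburn (n : ℕ) : Set (List ℕ) :=
  {σ | σ ∈ LinWords n ∧ ∀ i j k : ℕ, 1 ≤ i → i < j → j < k → k ≤ n →
    (Even j → ¬ (ltIn σ j i ∧ ltIn σ j k)) ∧ (Odd j → ¬ (ltIn σ i j ∧ ltIn σ k j))}

/-- `γ n`: the maximum cardinality of a peak-pit domain in `L([n])`. -/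
noncomputable def gamma (n : ℕ) : ℕ :=
  sSup {m | ∃ D : Set (List ℕ), D ⊆ LinWords n ∧ IsPeakPit n D ∧ D.ncard = m}

/-! A step in the Bruhat graph changes the relative order of exactly one pair of alternatives.
Suppose `j` is worst in some `σ₁ ∈ D` and best in some `σ₂ ∈ D`, and say `σ₁` restricts to
`j < i < k`. Since `ω ∈ D`, acyclicity rules out `i < k < j`, so `σ₂` restricts to `k < i < j`;
since `α ∈ D`, it then rules out `j < k < i`. Hence `k` is never the middle element of the triple,
so it can only switch from best to worst by overtaking two alternatives in one step. Thus `k` is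
best all along a Bruhat path from `σ₁` to `σ₂`, contradicting that it is worst in `σ₂`.
The case `σ₁ = j < k < i` is the same with `i` and `k` exchanged. -/

open scoped symmDiff

lemma ltIn_asymm {σ : List ℕ} {x y : ℕ} (h : ltIn σ x y) : ¬ ltIn σ y x :=
  Nat.lt_asymm h

lemma ltIn_trans {σ : List ℕ} {x y z : ℕ} (h : ltIn σ x y) (h' : ltIn σ y z) : ltIn σ x z :=
  Nat.lt_trans h h'

lemma ne_of_ltIn {σ : List ℕ} {x y : ℕ} (h : ltIn σ x y) : x ≠ y :=
  ne_of_apply_ne σ.idxOf (Nat.ne_of_lt h)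

lemma mem_of_ltIn {σ : List ℕ} {x y : ℕ} (h : ltIn σ x y) : x ∈ σ :=
  List.idxOf_lt_length_iff.mp (h.trans_le List.idxOf_le_length)

lemma ltIn_or_ltIn_of_ne {σ : List ℕ} {x y : ℕ} (hx : x ∈ σ) (hxy : x ≠ y) :
    ltIn σ x y ∨ ltIn σ y x := by
  refine (Nat.lt_trichotomy (σ.idxOf x) (σ.idxOf y)).imp_right (Or.resolve_left · fun h => ?_)
  exact hxy (List.idxOf_inj hx |>.mp h)

lemma idxOf_range' {s m x : ℕ} (h : s ≤ x) (h' : x < s + m) :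
    (List.range' s m).idxOf x = x - s := by
  have := (List.nodup_range' (s := s) (n := m)).idxOf_getElem (x - s) (by simp; omega)
  simpa [List.getElem_range', show s + (x - s) = x by omega] using this

lemma idxOf_reverse_range' {m x : ℕ} (h : 1 ≤ x) (h' : x ≤ m) :
    (List.range' 1 m).reverse.idxOf x = m - x := by
  have := (List.nodup_reverse.mpr (List.nodup_range' (s := 1) (n := m))).idxOf_getElem (m - x)
    (by simp; omega)
  simpa [List.getElem_range', show 1 + (m - 1 - (m - x)) = x by omega] using this

lemma ltIn_range' {n x y : ℕ} (hx : 1 ≤ x) (hxy : x < y) (hy : y ≤ n) :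
    ltIn (List.range' 1 n) x y := by
  unfold ltIn
  rw [idxOf_range' hx (by omega), idxOf_range' (by omega) (by omega)]
  omega

lemma ltIn_reverse_range' {n x y : ℕ} (hx : 1 ≤ x) (hxy : x < y) (hy : y ≤ n) :
    ltIn (List.range' 1 n).reverse y x := by
  unfold ltIn
  rw [idxOf_reverse_range' hx (by omega), idxOf_reverse_range' (by omega) hy]
  omega

lemma mem_of_mem_linWords {n x : ℕ} {σ : List ℕ} (hσ : σ ∈ LinWords n) (hx : 1 ≤ x)
    (hxn : x ≤ n) : x ∈ σ := by
  rw [List.Perm.mem_iff hσ, List.mem_range']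
  exact ⟨x - 1, by omega, by omega⟩

lemma Covers.symmDiff_invPairs_eq {σ τ : List ℕ} (h : Covers τ σ) :
    ∃ p, InvPairs σ ∆ InvPairs τ = {p} := by
  obtain ⟨p, hp, he⟩ := h
  refine ⟨p, Set.ext fun q => ?_⟩
  rw [he, Set.mem_symmDiff, Set.mem_insert_iff, Set.mem_singleton_iff]
  by_cases hq : q = p
  · simp [hq, hp]
  · simp [hq]

lemma BruhatAdj.subsingleton_symmDiff_invPairs {σ τ : List ℕ} (h : BruhatAdj σ τ) :
    (InvPairs σ ∆ InvPairs τ).Subsingleton := by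
  rcases h with h | h
  · obtain ⟨p, hp⟩ := h.symmDiff_invPairs_eq
    exact hp ▸ Set.subsingleton_singleton
  · obtain ⟨p, hp⟩ := h.symmDiff_invPairs_eq
    exact symmDiff_comm (InvPairs σ) _ ▸ hp ▸ Set.subsingleton_singleton

lemma mem_symmDiff_invPairs_of_ltIn {σ τ : List ℕ} {x y : ℕ} (hy : y ∈ σ) (hx : x ∈ τ)
    (hσ : ltIn σ x y) (hτ : ltIn τ y x) :
    (min x y, max x y) ∈ InvPairs σ ∆ InvPairs τ := by
  rcases Nat.lt_or_gt_of_ne (ne_of_ltIn hσ) with hxy | hyx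
  · rw [min_eq_left hxy.le, max_eq_right hxy.le]
    exact Or.inr ⟨⟨hx, mem_of_ltIn hτ, hxy, hτ⟩, fun h => ltIn_asymm hσ h.2.2.2⟩
  · rw [min_eq_right hyx.le, max_eq_left hyx.le]
    exact Or.inl ⟨⟨hy, mem_of_ltIn hσ, hyx, hσ⟩, fun h => ltIn_asymm hτ h.2.2.2⟩

lemma BruhatAdj.not_overtake_two {σ τ : List ℕ} (h : BruhatAdj σ τ) {a b c : ℕ} (hab : a ≠ b)
    (haτ : a ∈ τ) (hbτ : b ∈ τ) (hcσ : c ∈ σ) (haσ : ltIn σ a c) (hbσ : ltIn σ b c)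
    (haτ' : ltIn τ c a) (hbτ' : ltIn τ c b) : False := by
  have hac := ne_of_ltIn haσ
  have hbc := ne_of_ltIn hbσ
  have := h.subsingleton_symmDiff_invPairs (mem_symmDiff_invPairs_of_ltIn hcσ haτ haσ haτ')
    (mem_symmDiff_invPairs_of_ltIn hcσ hbτ hbσ hbτ')
  simp only [Prod.ext_iff] at this
  omega

lemma PathIn.preserves {D : Set (List ℕ)} {σ τ : List ℕ} (hpath : PathIn D σ τ)
    {Q : List ℕ → Prop} (hstep : ∀ ρ ∈ D, ∀ ρ' ∈ D, BruhatAdj ρ ρ' → Q ρ → Q ρ') (hσ : Q σ) :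
    Q τ := by
  obtain ⟨m, f, rfl, rfl, hmem, hadj⟩ := hpath
  suffices ∀ t ≤ m, Q (f t) from this m le_rfl
  intro t ht
  induction t with
  | zero => exact hσ
  | succ t ih => exact hstep _ (hmem t (by omega)) _ (hmem _ ht) (hadj t ht) (ih (by omega))

lemma PathIn.ltIn_of_not_middle {D : Set (List ℕ)} {σ τ : List ℕ} (hpath : PathIn D σ τ)
    {a b c : ℕ} (hab : a ≠ b) (hmem : ∀ ρ ∈ D, a ∈ ρ ∧ b ∈ ρ ∧ c ∈ ρ)
    (hmid : ∀ ρ ∈ D, ¬ (ltIn ρ a c ∧ ltIn ρ c b) ∧ ¬ (ltIn ρ b c ∧ ltIn ρ c a))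
    (hσ : ltIn σ a c ∧ ltIn σ b c) : ltIn τ a c ∧ ltIn τ b c := by
  refine hpath.preserves (Q := fun ρ => ltIn ρ a c ∧ ltIn ρ b c)
    (fun ρ hρ ρ' hρ' hadj ⟨haρ, hbρ⟩ => ?_) hσ
  obtain ⟨ha', hb', -⟩ := hmem ρ' hρ'
  rcases ltIn_or_ltIn_of_ne ha' (ne_of_ltIn haρ) with h₁ | h₁ <;>
    rcases ltIn_or_ltIn_of_ne hb' (ne_of_ltIn hbρ) with h₂ | h₂
  · exact ⟨h₁, h₂⟩
  · exact ((hmid ρ' hρ').1 ⟨h₁, h₂⟩).elim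
  · exact ((hmid ρ' hρ').2 ⟨h₂, h₁⟩).elim
  · exact (hadj.not_overtake_two hab ha' hb' (hmem ρ hρ).2.2 haρ hbρ h₁ h₂).elim

lemma not_cyclicTriple {D : Set (List ℕ)} (hD : ¬ IsCyclicDom D) {a b c : ℕ} (hab : a ≠ b)
    (hbc : b ≠ c) (hac : a ≠ c) : ¬ CyclicTriple D a b c :=
  fun h => hD ⟨a, b, c, hab, hbc, hac, Or.inl h⟩

/-- The roles of `a < b < c` and `c < b < a` are played by `α` and `ω`, in either order. -/
lemma false_of_worst_of_best {D : Set (List ℕ)} (hCD : ¬ IsCyclicDom D) {a b c : ℕ}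
    (hab : a ≠ b) (hbc : b ≠ c) (hac : a ≠ c) (hmem : ∀ ρ ∈ D, a ∈ ρ ∧ b ∈ ρ ∧ c ∈ ρ)
    {up down σ₁ σ₂ : List ℕ} (hup : up ∈ D) (hup' : ltIn up a b ∧ ltIn up b c)
    (hdown : down ∈ D) (hdown' : ltIn down c b ∧ ltIn down b a)
    (hσ₁ : σ₁ ∈ D) (h₁ : ltIn σ₁ b a ∧ ltIn σ₁ a c) (hσ₂ : σ₂ ∈ D) (h₂ : ltIn σ₂ a b ∧ ltIn σ₂ c b)
    (hpath : PathIn D σ₁ σ₂) : False := by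
  have no_acb : ∀ ρ ∈ D, ¬ (ltIn ρ a c ∧ ltIn ρ c b) := fun ρ hρ h =>
    not_cyclicTriple hCD hbc.symm hab.symm hac.symm ⟨down, hdown, σ₁, hσ₁, ρ, hρ, hdown', h₁, h⟩
  have hca₂ : ltIn σ₂ c a :=
    (ltIn_or_ltIn_of_ne (hmem σ₂ hσ₂).2.2 hac.symm).resolve_right fun h => no_acb σ₂ hσ₂ ⟨h, h₂.2⟩
  have no_bca : ∀ ρ ∈ D, ¬ (ltIn ρ b c ∧ ltIn ρ c a) := fun ρ hρ h =>
    not_cyclicTriple hCD hab hbc hac ⟨up, hup, ρ, hρ, σ₂, hσ₂, hup', h, hca₂, h₂.1⟩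
  have hc_best := hpath.ltIn_of_not_middle hab hmem (fun ρ hρ => ⟨no_acb ρ hρ, no_bca ρ hρ⟩)
    ⟨h₁.2, ltIn_trans h₁.1 h₁.2⟩
  exact ltIn_asymm hc_best.1 hca₂

/-- every connected Condorcet domain (containing `α` and `ω`, and
inducing a connected subgraph of the Bruhat graph) is a peak-pit domain. -/
theorem statement_16 (n : ℕ) (D : Set (List ℕ)) (hD : D ⊆ LinWords n)
    (hα : List.range' 1 n ∈ D) (hω : (List.range' 1 n).reverse ∈ D)
    (hCD : ¬ IsCyclicDom D)
    (hconn : ∀ σ ∈ D, ∀ τ ∈ D, PathIn D σ τ) :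
    IsPeakPit n D := by
  intro i j k hi hij hjk hk
  by_contra hpp
  simp only [not_or, PeakCond, PitCond, not_forall, not_not] at hpp
  obtain ⟨⟨σ₁, hσ₁, h₁⟩, ⟨σ₂, hσ₂, h₂⟩⟩ := hpp
  have hmem : ∀ ρ ∈ D, i ∈ ρ ∧ j ∈ ρ ∧ k ∈ ρ := fun ρ hρ =>
    ⟨mem_of_mem_linWords (hD hρ) hi (by omega), mem_of_mem_linWords (hD hρ) (by omega) (by omega),
      mem_of_mem_linWords (hD hρ) (by omega) hk⟩
  have hα_ij := ltIn_range' (n := n) hi hij (by omega)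
  have hα_jk := ltIn_range' (by omega) hjk hk
  have hω_ji := ltIn_reverse_range' (n := n) hi hij (by omega)
  have hω_kj := ltIn_reverse_range' (by omega) hjk hk
  rcases ltIn_or_ltIn_of_ne (hmem σ₁ hσ₁).1 (hij.trans hjk).ne with hik | hki
  · exact false_of_worst_of_best hCD hij.ne hjk.ne (hij.trans hjk).ne hmem hα ⟨hα_ij, hα_jk⟩
      hω ⟨hω_kj, hω_ji⟩ hσ₁ ⟨h₁.1, hik⟩ hσ₂ h₂ (hconn _ hσ₁ _ hσ₂)
  · exact false_of_worst_of_best hCD hjk.ne' hij.ne' (hij.trans hjk).ne'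
      (fun ρ hρ => ⟨(hmem ρ hρ).2.2, (hmem ρ hρ).2.1, (hmem ρ hρ).1⟩) hω ⟨hω_kj, hω_ji⟩
      hα ⟨hα_ij, hα_jk⟩ hσ₁ ⟨h₁.2, hki⟩ hσ₂ ⟨h₂.2, h₂.1⟩ (hconn _ hσ₁ _ hσ₂)
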